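/- On ℝ^8 = ℝ^7 ⊕ span(e₈), define σ₁ = ω₁ + e^{58} − e^{67}, σ₂ = ω₂ + e^{68} − e^{75}, σ₃ = ω₃ + e^{78} − e^{56}, with ω_s as above. Then ½(σ₁² + σ₂² + σ₃²) = α∧e^8 + β, where α and β are the standard SO(4)-forms on ℝ^7. -/

import Mathlib

/-!
Write `σ_s = ω_s + τ_s` with `τ₁ = e^{58} - e^{67}`, `τ₂ = e^{68} - e^{75}`, `τ₃ = e^{78} - e^{56}`.
Every summand has the shape `e^{ab} - e^{cd}`; such a form squares to `-2 e^{abcd}`, and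
2-forms commute, so `σ_s² = ω_s² + 2 ω_s∧τ_s + τ_s²`. Each `e^{abcd}` coming from a square is an
even permutation of `e^{1234}` or of `e^{5678}`, so the squares add up to
`-6 e^{1234} - 6 e^{5678}`. The cross terms split along `τ_s = e^{s+4}∧e^8 - (…)` into the
`ω_s`-parts of `α∧e^8` and of `β`.
-/

noncomputable section

/-- `E i` is the basis covector `e^{i+1}` of `(ℝ^8)^*` inside the exterior algebra. -/
def E (i : Fin 8) : ExteriorAlgebra ℝ (Fin 8 → ℝ) :=
  ExteriorAlgebra.ι ℝ (Pi.single i 1)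

def σ₁ : ExteriorAlgebra ℝ (Fin 8 → ℝ) :=
  E 0 * E 1 - E 2 * E 3 + E 4 * E 7 - E 5 * E 6
def σ₂ : ExteriorAlgebra ℝ (Fin 8 → ℝ) :=
  E 0 * E 2 - E 3 * E 1 + E 5 * E 7 - E 6 * E 4
def σ₃ : ExteriorAlgebra ℝ (Fin 8 → ℝ) :=
  E 0 * E 3 - E 1 * E 2 + E 6 * E 7 - E 4 * E 5

/-- `α = ω₁∧e^5 + ω₂∧e^6 + ω₃∧e^7 − 3 e^{567}` (0-based indices). -/
def α : ExteriorAlgebra ℝ (Fin 8 → ℝ) :=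
  (E 0 * E 1 - E 2 * E 3) * E 4 + (E 0 * E 2 - E 3 * E 1) * E 5
    + (E 0 * E 3 - E 1 * E 2) * E 6 - (3:ℝ) • (E 4 * E 5 * E 6)

/-- `β = −ω₁∧e^{67} − ω₂∧(e^7∧e^5) − ω₃∧e^{56} − 3 e^{1234}`. -/
def β : ExteriorAlgebra ℝ (Fin 8 → ℝ) :=
  -((E 0 * E 1 - E 2 * E 3) * (E 5 * E 6))
    - (E 0 * E 2 - E 3 * E 1) * (E 6 * E 4)
    - (E 0 * E 3 - E 1 * E 2) * (E 4 * E 5)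
    - (3:ℝ) • (E 0 * E 1 * E 2 * E 3)

namespace ExteriorAlgebra

variable {R M : Type*} [CommRing R] [AddCommGroup M] [Module R M]

theorem ι_mul_ι_eq_neg_swap (a b : M) : ι R a * ι R b = -(ι R b * ι R a) :=
  eq_neg_of_add_eq_zero_left (ι_add_mul_swap a b)

theorem ι_mul_ι_mul_self (a b : M) : ι R a * ι R b * (ι R a * ι R b) = 0 := by
  rw [mul_assoc, ← mul_assoc (ι R b), ι_mul_ι_eq_neg_swap b a, neg_mul, mul_neg,
    ← mul_assoc, ← mul_assoc, ι_sq_zero, zero_mul, zero_mul, neg_zero]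

theorem ι_mul_ι_mul_ι_eq_cycle (a b c : M) : ι R a * ι R b * ι R c = ι R b * ι R c * ι R a := by
  rw [ι_mul_ι_eq_neg_swap a, neg_mul, mul_assoc, ι_mul_ι_eq_neg_swap a, mul_neg, neg_neg,
    mul_assoc]

theorem commute_ι_mul_ι (a b c d : M) : Commute (ι R a * ι R b) (ι R c * ι R d) :=
  calc ι R a * ι R b * (ι R c * ι R d) = ι R a * (ι R b * ι R c * ι R d) := by
        simp only [mul_assoc]
    _ = ι R a * ι R c * ι R d * ι R b := by rw [ι_mul_ι_mul_ι_eq_cycle b]; simp only [mul_assoc]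
    _ = ι R c * ι R d * (ι R a * ι R b) := by rw [ι_mul_ι_mul_ι_eq_cycle a]; simp only [mul_assoc]

theorem ι_mul_ι_sub_ι_mul_ι_mul_self (a b c d : M) :
    (ι R a * ι R b - ι R c * ι R d) * (ι R a * ι R b - ι R c * ι R d) =
      (-2 : R) • (ι R a * ι R b * (ι R c * ι R d)) := by
  rw [sub_mul, mul_sub, mul_sub, ι_mul_ι_mul_self, ι_mul_ι_mul_self,
    ← (commute_ι_mul_ι a b c d).eq]
  module

end ExteriorAlgebra

theorem Commute.add_mul_self_eq {A : Type*} [Semiring A] {x y : A} (h : Commute x y) :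
    (x + y) * (x + y) = x * x + 2 * (x * y) + y * y := by
  simpa [sq, mul_assoc] using h.add_sq

theorem E_pair_add_pair_mul_self (a b c d a' b' c' d' : Fin 8) :
    (E a * E b - E c * E d + (E a' * E b' - E c' * E d')) *
        (E a * E b - E c * E d + (E a' * E b' - E c' * E d')) =
      (-2 : ℝ) • (E a * E b * (E c * E d))
        + (2 : ℝ) • ((E a * E b - E c * E d) * (E a' * E b' - E c' * E d'))
        + (-2 : ℝ) • (E a' * E b' * (E c' * E d')) := by
  have hcomm : Commute (E a * E b - E c * E d) (E a' * E b' - E c' * E d') := by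
    apply_rules [Commute.sub_left, Commute.sub_right, ExteriorAlgebra.commute_ι_mul_ι]
  rw [hcomm.add_mul_self_eq, two_mul, ← two_smul ℝ]
  simp only [E, ExteriorAlgebra.ι_mul_ι_sub_ι_mul_ι_mul_self]

theorem half_sum_sigma_sq_eq_alpha_wedge_e8_add_beta :
    (1/2 : ℝ) • (σ₁ * σ₁ + σ₂ * σ₂ + σ₃ * σ₃) = α * E 7 + β := by
  rw [σ₁, σ₂, σ₃, add_sub_assoc, add_sub_assoc, add_sub_assoc, E_pair_add_pair_mul_self,
    E_pair_add_pair_mul_self, E_pair_add_pair_mul_self, α, β]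
  -- The hypothesis `j < i` only orients the swaps, so that `simp` sorts every monomial.
  have swap (i j : Fin 8) (_ : j < i) : E i * E j = -(E j * E i) :=
    ExteriorAlgebra.ι_mul_ι_eq_neg_swap _ _
  have swap_mul (i j : Fin 8) (_ : j < i) (x) : E i * (E j * x) = -(E j * (E i * x)) := by
    rw [← mul_assoc, swap i j ‹_›, neg_mul, mul_assoc]
  simp (disch := decide) only [mul_assoc, swap, swap_mul, mul_neg, neg_neg, mul_sub, sub_mul,
    add_mul, smul_mul_assoc]
  module

end
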